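/- In Game 2 on a set A ⊆ ω^ω, Player II has a winning strategy if and only if there exists a Hechler tree H with [H] ⊆ A. -/

import Mathlib

/-!
A Player II who keeps her moves inside a Hechler tree always can, since an infinite set meets
the cofinitely many successors of every node. Conversely, given a winning strategy `σ`, choose
for each finite sequence `s`, one entry at a time, infinite moves of Player I to which `σ`
replies with `s`. The sequences for which this succeeds form a tree, which is Hechler because at
each node the numbers `σ` never replies form a finite set (Player I could play that set
otherwise), and each branch of it is the outcome of a play against `σ`, hence lies in `A`.
-/

/-- The restriction `x↾n` of `x : ℕ → ℕ` to its first `n` values, as a finite sequence. -/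
def res (x : ℕ → ℕ) (n : ℕ) : List ℕ := List.ofFn fun i : Fin n => x i

/-- A subtree of `ω^{<ω}`: a set of finite sequences closed under initial segments. -/
def IsSubtree (T : Set (List ℕ)) : Prop := ∀ s ∈ T, ∀ t : List ℕ, t <+: s → t ∈ T

/-- `[T]`, the set of branches of a subtree `T`. -/
def branches (T : Set (List ℕ)) : Set (ℕ → ℕ) := {x | ∀ n, res x n ∈ T}

/-- A Hechler tree: a (nonempty) subtree in which every node splits cofinitely often. -/
def IsHechler (T : Set (List ℕ)) : Prop :=
  IsSubtree T ∧ [] ∈ T ∧ ∀ s ∈ T, {n : ℕ | s ++ [n] ∉ T}.Finite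

/-- Game 2 on `A`: at round `k` Player I plays an infinite set `X k ⊆ ω` and Player II
responds with `m k ∈ X k`; Player II wins iff `m ∈ A`.  A strategy for Player II maps
Player I's previous moves `X 0, …, X (k-1)` together with the current move `X k` to
Player II's move `m k` (Player II's previous responses are determined by the strategy
itself).  It is a *winning* strategy iff it is legal (`σ (X 0, …, X k) ∈ X k` whenever the
`X i` are infinite) and every play following it lands in `A`. -/
def IIWinsGame2 (A : Set (ℕ → ℕ)) : Prop :=
  ∃ σ : List (Set ℕ) → Set ℕ → ℕ,
    (∀ p : List (Set ℕ), ∀ X : Set ℕ, (∀ Y ∈ p, Y.Infinite) → X.Infinite → σ p X ∈ X) ∧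
    ∀ X : ℕ → Set ℕ, (∀ k, (X k).Infinite) →
      (fun k => σ (List.ofFn fun i : Fin k => X i) (X k)) ∈ A

lemma res_succ (x : ℕ → ℕ) (n : ℕ) : res x (n + 1) = res x n ++ [x n] :=
  List.ofFn_succ_last

def responses {α β : Type*} (f : List β → α → β) (l : List α) : List β :=
  l.foldl (fun acc a => acc ++ [f acc a]) []

section responses

variable {α β : Type*} (f : List β → α → β)

@[simp]
lemma responses_nil : responses f [] = [] := rfl

lemma responses_concat (l : List α) (a : α) :
    responses f (l ++ [a]) = responses f l ++ [f (responses f l) a] := by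
  simp only [responses, List.foldl_append, List.foldl_cons, List.foldl_nil]

lemma responses_ofFn (u : ℕ → α) (k : ℕ) :
    responses f (List.ofFn fun i : Fin k => u i) =
      List.ofFn fun i : Fin k => f (responses f (List.ofFn fun j : Fin i => u j)) (u i) := by
  induction k with
  | zero => rfl
  | succ k ih =>
    rw [List.ofFn_succ_last, List.ofFn_succ_last]
    simp only [Fin.val_castSucc, Fin.val_last]
    rw [responses_concat, ih]

end responses

def successorTree (S : List ℕ → Set ℕ) : Set (List ℕ) :=
  {s | ∀ t n, t ++ [n] <+: s → n ∈ S t}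

section successorTree

variable {S : List ℕ → Set ℕ}

lemma isSubtree_successorTree : IsSubtree (successorTree S) :=
  fun _ hs _ hts t n htn => hs t n (htn.trans hts)

lemma nil_mem_successorTree : [] ∈ successorTree S := by
  intro t n h
  simpa using h.length_le

lemma concat_mem_successorTree_iff {s : List ℕ} {n : ℕ} :
    s ++ [n] ∈ successorTree S ↔ s ∈ successorTree S ∧ n ∈ S s := by
  refine ⟨fun h => ⟨isSubtree_successorTree _ h s (List.prefix_append s [n]),
    h s n List.prefix_rfl⟩, ?_⟩
  rintro ⟨hs, hn⟩ t m htm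
  rcases List.prefix_concat_iff.mp htm with heq | hpre
  · obtain ⟨rfl, ⟨⟩⟩ := List.append_inj' heq rfl
    exact hn
  · exact hs t m hpre

lemma isHechler_successorTree (h : ∀ s ∈ successorTree S, (S s)ᶜ.Finite) :
    IsHechler (successorTree S) :=
  ⟨isSubtree_successorTree, nil_mem_successorTree, fun s hs =>
    (h s hs).subset fun _ hn hnS => hn (concat_mem_successorTree_iff.mpr ⟨hs, hnS⟩)⟩

lemma mem_successor_of_mem_branches {x : ℕ → ℕ} (hx : x ∈ branches (successorTree S))
    (k : ℕ) : x k ∈ S (res x k) := by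
  have := hx (k + 1)
  rw [res_succ] at this
  exact (concat_mem_successorTree_iff.mp this).2

end successorTree

/-- Player II moves to a successor, in `T`, of her previous moves. -/
lemma iiWinsGame2_of_exists_concat_mem {A : Set (ℕ → ℕ)} {T : Set (List ℕ)} (hT : [] ∈ T)
    (hTA : branches T ⊆ A)
    (hsucc : ∀ s ∈ T, ∀ X : Set ℕ, X.Infinite → ∃ n ∈ X, s ++ [n] ∈ T) : IIWinsGame2 A := by
  have : ∀ s (X : Set ℕ), ∃ n, s ∈ T → X.Infinite → n ∈ X ∧ s ++ [n] ∈ T := fun s X => by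
    by_cases h : s ∈ T ∧ X.Infinite
    · obtain ⟨n, hnX, hnT⟩ := hsucc s h.1 X h.2
      exact ⟨n, fun _ _ => ⟨hnX, hnT⟩⟩
    · exact ⟨0, fun hs hX => absurd ⟨hs, hX⟩ h⟩
  choose ρ hρ using this
  have responses_mem : ∀ p : List (Set ℕ), (∀ Y ∈ p, Y.Infinite) → responses ρ p ∈ T := by
    intro p
    induction p using List.reverseRecOn with
    | nil => exact fun _ => hT
    | append_singleton p X ih =>
      intro hp
      rw [responses_concat]
      exact (hρ _ _ (ih fun Y hY => hp Y (by simp [hY])) (hp X (by simp))).2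
  refine ⟨fun p X => ρ (responses ρ p) X, fun p X hp hX => (hρ _ _ (responses_mem p hp) hX).1,
    fun X hX => hTA fun k => ?_⟩
  rw [res, ← responses_ofFn]
  exact responses_mem _ (by simpa using fun i : Fin k => hX i)

section strategyTree

variable (σ : List (Set ℕ) → Set ℕ → ℕ)

/-- An infinite move of Player I to which `σ`, after the moves `p`, replies `n`; junk if there
is none. -/
noncomputable def witnessMove (p : List (Set ℕ)) (n : ℕ) : Set ℕ :=
  Classical.epsilon fun X => X.Infinite ∧ σ p X = n

/-- The sequences that `σ` plays against the canonical witness moves of Player I. -/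
noncomputable def strategyTree : Set (List ℕ) :=
  successorTree fun s => σ (responses (witnessMove σ) s) '' {X | X.Infinite}

variable {σ}

lemma witnessMove_spec {p : List (Set ℕ)} {n : ℕ} (hn : n ∈ σ p '' {X | X.Infinite}) :
    (witnessMove σ p n).Infinite ∧ σ p (witnessMove σ p n) = n :=
  Classical.epsilon_spec (by simpa using hn)

lemma infinite_of_mem_responses_witnessMove {s : List ℕ} (hs : s ∈ strategyTree σ) :
    ∀ Y ∈ responses (witnessMove σ) s, Y.Infinite := by
  induction s using List.reverseRecOn with
  | nil => simp
  | append_singleton s n ih =>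
    obtain ⟨hs, hn⟩ := concat_mem_successorTree_iff.mp hs
    intro Y hY
    rw [responses_concat, List.mem_append, List.mem_singleton] at hY
    rcases hY with hY | rfl
    · exact ih hs Y hY
    · exact (witnessMove_spec hn).1

/-- Along a branch `x`, the canonical witness moves form a play of Player I against which `σ`
produces `x`. -/
lemma branches_strategyTree_subset {A : Set (ℕ → ℕ)}
    (hwin : ∀ X : ℕ → Set ℕ, (∀ k, (X k).Infinite) →
      (fun k => σ (List.ofFn fun i : Fin k => X i) (X k)) ∈ A) :
    branches (strategyTree σ) ⊆ A := by
  intro x hx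
  let Y k := witnessMove σ (responses (witnessMove σ) (res x k)) (x k)
  have hY k := witnessMove_spec (mem_successor_of_mem_branches hx k)
  have hplay k : responses (witnessMove σ) (res x k) = List.ofFn fun i : Fin k => Y i :=
    responses_ofFn _ x k
  convert hwin Y fun k => (hY k).1 using 1
  funext k
  rw [← hplay]
  exact (hY k).2.symm

variable (hlegal : ∀ p : List (Set ℕ), ∀ X : Set ℕ, (∀ Y ∈ p, Y.Infinite) → X.Infinite → σ p X ∈ X)
include hlegal

/-- Otherwise Player I could play the infinite set of numbers that `σ` never replies, and `σ`
would have to reply one of them. -/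
lemma finite_compl_image_infinite {p : List (Set ℕ)} (hp : ∀ Y ∈ p, Y.Infinite) :
    (σ p '' {X | X.Infinite})ᶜ.Finite := by
  by_contra h
  exact hlegal p _ hp h ⟨_, h, rfl⟩

lemma isHechler_strategyTree : IsHechler (strategyTree σ) :=
  isHechler_successorTree fun _ hs =>
    finite_compl_image_infinite hlegal (infinite_of_mem_responses_witnessMove hs)

end strategyTree

theorem game2_playerII_iff_hechler (A : Set (ℕ → ℕ)) :
    IIWinsGame2 A ↔ ∃ H : Set (List ℕ), IsHechler H ∧ branches H ⊆ A := by
  constructor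
  · rintro ⟨σ, hlegal, hwin⟩
    exact ⟨strategyTree σ, isHechler_strategyTree hlegal, branches_strategyTree_subset hwin⟩
  · rintro ⟨H, ⟨-, hroot, hcofinite⟩, hHA⟩
    refine iiWinsGame2_of_exists_concat_mem hroot hHA fun s hs X hX => ?_
    obtain ⟨n, hnX, hnH⟩ := (hX.sdiff (hcofinite s hs)).nonempty
    exact ⟨n, hnX, not_not.mp hnH⟩
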